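/- arXiv:2403.19381 — 2 statements merged into one kernel-verified Lean document; each statement's English description precedes it below -/
import Mathlib

section
/- In the conjugate Gaussian sequence model, the Bayesian posterior radius satisfies r_j² := Tr((AᵀA)^α (j(AᵀA + j⁻¹I))⁻¹) = ∑_{i=1}^∞ s_i^{2α}/(j s_i² + 1), where (s_i) are the singular values of A; moreover if s_i ≍ i^{−β} with β > 1/2 and α = 1 then r_j² ≍ j^{−1 + 1/(2β)}. -/
/-!
Write `p = 2β > 1`, `t_i = s_i² ≍ (i + 1)^{-p}` and `j = x^p`. The term `t_i / (j t_i + 1)` is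
`≍ 1/j` while `(i + 1)^p ≤ j`, i.e. for `i < x`, and at most `t_i` beyond. The first `⌊x⌋ ≥ x/2`
terms therefore contribute `≍ x/j = x^{1-p}`, and the tail `∑_{i ≥ ⌊x⌋} (i + 1)^{-p}` is bounded
by the integral `∫_{⌊x⌋}^∞ u^{-p} du ≲ x^{1-p}`.
-/

open Real Finset

lemma sum_range_rpow_neg_le {p x : ℝ} (hp : 1 < p) (hx : 0 < x) (n : ℕ) :
    ∑ i ∈ range n, (x + (i + 1 : ℕ)) ^ (-p) ≤ x ^ (1 - p) / (p - 1) := by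
  have hanti : AntitoneOn (fun t : ℝ => t ^ (-p)) (Set.Icc x (x + n)) :=
    (antitoneOn_rpow_Ioi_of_exponent_nonpos (by linarith)).mono
      fun t ht => lt_of_lt_of_le hx ht.1
  have hint : ∫ t in x..x + n, t ^ (-p) = ((x + n) ^ (1 - p) - x ^ (1 - p)) / (1 - p) := by
    rw [integral_rpow (Or.inr ⟨by linarith, ?_⟩), neg_add_eq_sub]
    rw [Set.uIcc_of_le (le_add_of_nonneg_right n.cast_nonneg)]
    exact fun h => (lt_irrefl 0) (lt_of_lt_of_le hx h.1)
  calc ∑ i ∈ range n, (x + (i + 1 : ℕ)) ^ (-p) ≤ ∫ t in x..x + n, t ^ (-p) :=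
        hanti.sum_le_integral
    _ = (x ^ (1 - p) - (x + n) ^ (1 - p)) / (p - 1) := by
        rw [hint, ← neg_sub p 1, div_neg, ← neg_div, neg_sub]
    _ ≤ x ^ (1 - p) / (p - 1) := by
        gcongr
        exact sub_le_self _ (by positivity)

lemma tsum_le_of_le_mul_rpow_neg {p x b : ℝ} (hp : 1 < p) (hx : 0 < x) (hb : 0 ≤ b) {f : ℕ → ℝ}
    (hf0 : ∀ i, 0 ≤ f i) (hf : ∀ i, f i ≤ b * (x + (i + 1 : ℕ)) ^ (-p)) :
    ∑' i, f i ≤ b * x ^ (1 - p) / (p - 1) :=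
  Real.tsum_le_of_sum_range_le hf0 fun n => calc
    ∑ i ∈ range n, f i ≤ ∑ i ∈ range n, b * (x + (i + 1 : ℕ)) ^ (-p) := sum_le_sum fun i _ => hf i
    _ ≤ b * x ^ (1 - p) / (p - 1) := by
        rw [← mul_sum, mul_div_assoc]
        exact mul_le_mul_of_nonneg_left (sum_range_rpow_neg_le hp hx n) hb

lemma div_mul_add_one_le_inv {t l : ℝ} (ht : 0 ≤ t) (hl : 0 < l) : t / (l * t + 1) ≤ l⁻¹ := by
  rw [div_le_iff₀ (by positivity)]
  field_simp
  linarith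

lemma div_mul_add_one_le_self {t l : ℝ} (ht : 0 ≤ t) (hl : 0 ≤ l) : t / (l * t + 1) ≤ t :=
  div_le_self ht (by nlinarith)

lemma div_mul_add_one_le_div_mul_add_one {u t l : ℝ} (hu : 0 ≤ u) (hut : u ≤ t) (hl : 0 ≤ l) :
    u / (l * u + 1) ≤ t / (l * t + 1) := by
  rw [div_le_div_iff₀ (by positivity) (by nlinarith)]
  nlinarith

lemma half_le_natFloor {x : ℝ} (hx : 1 ≤ x) : x / 2 ≤ ⌊x⌋₊ := by
  rcases le_or_gt x 2 with h | h
  · have : (1 : ℝ) ≤ ⌊x⌋₊ := by exact_mod_cast Nat.le_floor (by exact_mod_cast hx)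
    linarith
  · linarith [Nat.sub_one_lt_floor x]

lemma summable_div_mul_add_one {p b l : ℝ} {t : ℕ → ℝ} (hp : 1 < p) (hl : 0 ≤ l)
    (ht0 : ∀ i, 0 ≤ t i) (ht : ∀ i, t i ≤ b * ((i : ℝ) + 1) ^ (-p)) :
    Summable fun i => t i / (l * t i + 1) := by
  have hmaj : Summable fun i : ℕ => b * ((i : ℝ) + 1) ^ (-p) := by
    have := (summable_nat_add_iff 1).mpr (Real.summable_nat_rpow.mpr (by linarith : -p < -1))
    exact (this.mul_left b).congr fun i => by push_cast; rfl
  exact hmaj.of_nonneg_of_le (fun i => div_nonneg (ht0 i) (by nlinarith [ht0 i]))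
    fun i => (div_mul_add_one_le_self (ht0 i) hl).trans (ht i)

lemma le_tsum_div_mul_add_one {p a x : ℝ} {t : ℕ → ℝ} (hp : 0 < p) (ha : 0 < a) (hx : 1 ≤ x)
    (ht : ∀ i : ℕ, a * ((i : ℝ) + 1) ^ (-p) ≤ t i)
    (hsum : Summable fun i => t i / (x ^ p * t i + 1)) :
    a / (2 * (a + 1)) * x ^ (1 - p) ≤ ∑' i, t i / (x ^ p * t i + 1) := by
  set l := x ^ p
  have hx0 : 0 < x := by linarith
  have hl : 0 < l := by positivity
  have hxl : x ^ (1 - p) = x / l := by rw [rpow_sub hx0, rpow_one]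
  have ht0 : ∀ i, 0 < t i := fun i => (by positivity : 0 < a * ((i : ℝ) + 1) ^ (-p)).trans_le (ht i)
  have hhead : ∀ i ∈ range ⌊x⌋₊, a / ((a + 1) * l) ≤ t i / (l * t i + 1) := by
    intro i hi
    have hix : (i : ℝ) + 1 ≤ x := by
      exact_mod_cast (Nat.le_floor_iff hx0.le).mp (mem_range.mp hi)
    have hat : a / l ≤ t i := calc
      a / l = a * x ^ (-p) := by rw [rpow_neg hx0.le, div_eq_mul_inv]
      _ ≤ a * ((i : ℝ) + 1) ^ (-p) :=
          mul_le_mul_of_nonneg_left (rpow_le_rpow_of_nonpos (by positivity) hix (by linarith)) ha.le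
      _ ≤ t i := ht i
    calc a / ((a + 1) * l) = a / l / (l * (a / l) + 1) := by field_simp
      _ ≤ t i / (l * t i + 1) := div_mul_add_one_le_div_mul_add_one (by positivity) hat hl.le
  calc a / (2 * (a + 1)) * x ^ (1 - p) = x / 2 * (a / ((a + 1) * l)) := by
        rw [hxl]; field_simp
    _ ≤ ⌊x⌋₊ * (a / ((a + 1) * l)) := by gcongr; exact half_le_natFloor hx
    _ = ∑ i ∈ range ⌊x⌋₊, a / ((a + 1) * l) := by simp
    _ ≤ ∑ i ∈ range ⌊x⌋₊, t i / (l * t i + 1) := sum_le_sum hhead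
    _ ≤ ∑' i, t i / (l * t i + 1) :=
        hsum.sum_le_tsum _ fun i _ => div_nonneg (ht0 i).le (by nlinarith [ht0 i])

lemma tsum_div_mul_add_one_le {p b x : ℝ} {t : ℕ → ℝ} (hp : 1 < p) (hx : 1 ≤ x)
    (ht0 : ∀ i, 0 ≤ t i) (ht : ∀ i, t i ≤ b * ((i : ℝ) + 1) ^ (-p)) :
    ∑' i, t i / (x ^ p * t i + 1) ≤ (1 + b * 2 ^ (p - 1) / (p - 1)) * x ^ (1 - p) := by
  set l := x ^ p
  set N := ⌊x⌋₊
  have hx0 : 0 < x := by linarith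
  have hl : 0 < l := by positivity
  have hb : 0 ≤ b := by simpa using (ht0 0).trans (ht 0)
  have hN : x / 2 ≤ N := half_le_natFloor hx
  have hN0 : 0 < (N : ℝ) := by linarith
  have hhead : ∑ i ∈ range N, t i / (l * t i + 1) ≤ x ^ (1 - p) := calc
    _ ≤ ∑ i ∈ range N, l⁻¹ := sum_le_sum fun i _ => div_mul_add_one_le_inv (ht0 i) hl
    _ = N * l⁻¹ := by simp
    _ ≤ x * l⁻¹ := by gcongr; exact Nat.floor_le hx0.le
    _ = x ^ (1 - p) := by rw [rpow_sub hx0, rpow_one, div_eq_mul_inv]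
  have htail : ∑' i, t (i + N) / (l * t (i + N) + 1) ≤ b * 2 ^ (p - 1) / (p - 1) * x ^ (1 - p) :=
    calc
    _ ≤ b * (N : ℝ) ^ (1 - p) / (p - 1) := by
        refine tsum_le_of_le_mul_rpow_neg hp hN0 hb
          (fun i => div_nonneg (ht0 _) (by nlinarith [ht0 (i + N)])) fun i => ?_
        refine (div_mul_add_one_le_self (ht0 _) hl.le).trans ((ht _).trans_eq ?_)
        push_cast; ring_nf
    _ ≤ b * (x / 2) ^ (1 - p) / (p - 1) := by
        have := rpow_le_rpow_of_nonpos (by positivity) hN (by linarith : 1 - p ≤ 0)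
        gcongr
    _ = b * 2 ^ (p - 1) / (p - 1) * x ^ (1 - p) := by
        rw [div_rpow hx0.le zero_le_two, ← neg_sub p 1, rpow_neg zero_le_two]
        field_simp
  rw [← (summable_div_mul_add_one hp hl.le ht0 ht).sum_add_tsum_nat_add N]
  linarith

lemma mul_rpow_neg_sq {c y : ℝ} (hy : 0 ≤ y) (β : ℝ) :
    (c * y ^ (-β)) ^ 2 = c ^ 2 * y ^ (-(2 * β)) := by
  rw [mul_pow, ← rpow_natCast (y ^ (-β)), ← rpow_mul hy]
  push_cast
  ring_nf

theorem posterior_radius_asymptotics_general (s : ℕ → ℝ) (β : ℝ) (hβ : 1 / 2 < β)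
    (c C : ℝ) (hc : 0 < c)
    (hs : ∀ i : ℕ, c * ((i : ℝ) + 1) ^ (-β) ≤ s i ∧ s i ≤ C * ((i : ℝ) + 1) ^ (-β))
    (α : ℝ) (hα : α = 1)
    (r2 : ℕ → ℝ)
    (hr2 : ∀ j : ℕ, r2 j = ∑' i : ℕ, s i ^ (2 * α) / ((j : ℝ) * s i ^ 2 + 1)) :
    ∃ c' C' : ℝ, 0 < c' ∧ 0 < C' ∧ ∀ j : ℕ, 1 ≤ j →
      c' * (j : ℝ) ^ (-1 + 1 / (2 * β)) ≤ r2 j ∧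
        r2 j ≤ C' * (j : ℝ) ^ (-1 + 1 / (2 * β)) := by
  subst hα
  have hp : 1 < 2 * β := by linarith
  have hs0 : ∀ i, 0 ≤ s i := fun i => (by positivity : 0 ≤ c * ((i : ℝ) + 1) ^ (-β)).trans (hs i).1
  have hlow : ∀ i : ℕ, c ^ 2 * ((i : ℝ) + 1) ^ (-(2 * β)) ≤ s i ^ 2 := fun i => by
    rw [← mul_rpow_neg_sq (by positivity)]
    exact pow_le_pow_left₀ (by positivity) (hs i).1 2
  have hup : ∀ i : ℕ, s i ^ 2 ≤ C ^ 2 * ((i : ℝ) + 1) ^ (-(2 * β)) := fun i => by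
    rw [← mul_rpow_neg_sq (by positivity)]
    exact pow_le_pow_left₀ (hs0 i) (hs i).2 2
  refine ⟨c ^ 2 / (2 * (c ^ 2 + 1)), 1 + C ^ 2 * 2 ^ (2 * β - 1) / (2 * β - 1), by positivity,
    add_pos_of_pos_of_nonneg one_pos (div_nonneg (by positivity) (by linarith)), fun j hj => ?_⟩
  have hj : (1 : ℝ) ≤ j := by exact_mod_cast hj
  set x := (j : ℝ) ^ (1 / (2 * β))
  have hx : 1 ≤ x := one_le_rpow hj (by positivity)
  have hxj : x ^ (2 * β) = j := by
    rw [← rpow_mul (by positivity), one_div_mul_cancel (by positivity), rpow_one]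
  have hexp : x ^ (1 - 2 * β) = (j : ℝ) ^ (-1 + 1 / (2 * β)) := by
    rw [← rpow_mul (by positivity)]
    congr 1
    field_simp
    ring
  rw [hr2 j, ← hexp, ← hxj]
  simp only [mul_one, rpow_two]
  exact ⟨le_tsum_div_mul_add_one (by positivity) (by positivity) hx hlow
      (summable_div_mul_add_one hp (by positivity) (fun i => sq_nonneg _) hup),
    tsum_div_mul_add_one_le hp hx (fun i => sq_nonneg _) hup⟩

/-- In the conjugate Gaussian sequence model, the Bayesian posterior radius is
`r_j² = ∑_{i=1}^∞ s_i^{2α}/(j s_i² + 1)` in terms of the singular values `(s_i)` of `A`;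
if `s_i ≍ i^{−β}` with `β > 1/2` and `α = 1`, then `r_j² ≍ j^{−1 + 1/(2β)}`
(up to multiplicative constants independent of `j`). -/
theorem posterior_radius_asymptotics (s : ℕ → ℝ) (β : ℝ) (hβ : 1 / 2 < β)
    (c C : ℝ) (hc : 0 < c) (hcC : c ≤ C)
    (hs : ∀ i : ℕ, c * ((i : ℝ) + 1) ^ (-β) ≤ s i ∧ s i ≤ C * ((i : ℝ) + 1) ^ (-β))
    (α : ℝ) (hα : α = 1)
    (r2 : ℕ → ℝ)
    (hr2 : ∀ j : ℕ, r2 j = ∑' i : ℕ, s i ^ (2 * α) / ((j : ℝ) * s i ^ 2 + 1)) :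
    ∃ c' C' : ℝ, 0 < c' ∧ 0 < C' ∧ ∀ j : ℕ, 1 ≤ j →
      c' * (j : ℝ) ^ (-1 + 1 / (2 * β)) ≤ r2 j ∧
        r2 j ≤ C' * (j : ℝ) ^ (-1 + 1 / (2 * β)) :=
  posterior_radius_asymptotics_general s β hβ c C hc hs α hα r2 hr2
end

section
/- In the linear-Gaussian model, the sequential update θ̂_{j} = θ̂_{j-1} + j⁻¹(AᵀA + j⁻¹I)⁻¹ Aᵀ(z_j − Aθ̂_{j-1}) applied to the posterior mean reproduces the posterior mean: if θ̂_{j-1} = (AᵀA + (j−1)⁻¹I)⁻¹ Aᵀ z̄_{j-1}, then θ̂_j = (AᵀA + j⁻¹I)⁻¹ Aᵀ z̄_j, where z̄_j = (1/j)∑_{i=1}^j z_i. -/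
open scoped Matrix

/-!
Multiplying through by `j` puts the posterior mean in information form: with `s_j = ∑_{i ≤ j} z_i`,
`(AᵀA + j⁻¹I)⁻¹ Aᵀ z̄_j = (j AᵀA + I)⁻¹ Aᵀ s_j`, and the gain `j⁻¹ (AᵀA + j⁻¹I)⁻¹` of the update is
`P⁻¹` with `P = Q + AᵀA`, `Q = (j - 1) AᵀA + I`. The update is then the recursive least squares step
`θ + P⁻¹ Aᵀ (z - Aθ) = P⁻¹ (Qθ + Aᵀ z)`, and the hypothesis on `θ̂_{j-1}` says `Qθ̂_{j-1} = Aᵀ s_{j-1}`,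
so the right-hand side is `P⁻¹ Aᵀ s_j`.
-/

namespace Matrix

variable {n o : Type*} [Fintype n] [DecidableEq n] [Fintype o]

theorem add_inv_mulVec_transpose_mulVec_sub {R : Type*} [CommRing R] (Q : Matrix n n R)
    (A : Matrix o n R) (hP : IsUnit (Q + Aᵀ * A).det) (θ : n → R) (y : o → R) :
    θ + (Q + Aᵀ * A)⁻¹ *ᵥ (Aᵀ *ᵥ (y - A *ᵥ θ)) = (Q + Aᵀ * A)⁻¹ *ᵥ (Q *ᵥ θ + Aᵀ *ᵥ y) := by
  have hθ : θ = (Q + Aᵀ * A)⁻¹ *ᵥ ((Q + Aᵀ * A) *ᵥ θ) := by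
    rw [mulVec_mulVec, nonsing_inv_mul _ hP, one_mulVec]
  rw [mulVec_sub, mulVec_mulVec _ Aᵀ A]
  nth_rw 1 [hθ]
  rw [← mulVec_add, add_mulVec]
  congr 1
  abel

variable {K : Type*} [Field K]

omit [Fintype n] in
theorem smul_add_one_eq_smul_add_inv_smul_one (B : Matrix n n K) {c : K} (hc : c ≠ 0) :
    c • B + 1 = c • (B + c⁻¹ • 1) := by
  rw [smul_add, smul_smul, mul_inv_cancel₀ hc, one_smul]

theorem isUnit_det_smul_add_one (B : Matrix n n K) {c : K} (hc : c ≠ 0)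
    (hB : IsUnit (B + c⁻¹ • 1).det) : IsUnit (c • B + 1).det := by
  rw [smul_add_one_eq_smul_add_inv_smul_one B hc, det_smul]
  exact (hc.isUnit.pow _).mul hB

theorem inv_add_inv_smul_one_mulVec_inv_smul (B : Matrix n n K) {c : K} (hc : c ≠ 0)
    (hB : IsUnit (B + c⁻¹ • 1).det) (v : n → K) :
    (B + c⁻¹ • 1)⁻¹ *ᵥ (c⁻¹ • v) = (c • B + 1)⁻¹ *ᵥ v := by
  let := invertibleOfNonzero hc
  rw [smul_add_one_eq_smul_add_inv_smul_one B hc, inv_smul _ c hB, invOf_eq_inv, mulVec_smul,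
    smul_mulVec]

end Matrix

/-- In the linear-Gaussian model, the sequential update
`θ̂_j = θ̂_{j-1} + j⁻¹ (AᵀA + j⁻¹I)⁻¹ Aᵀ (z_j − A θ̂_{j-1})`
applied to the previous posterior mean reproduces the posterior mean: if
`θ̂_{j-1} = (AᵀA + (j−1)⁻¹I)⁻¹ Aᵀ z̄_{j-1}`, then
`θ̂_j = (AᵀA + j⁻¹I)⁻¹ Aᵀ z̄_j`, where `z̄_j = (1/j) ∑_{i=1}^j z_i`. -/
theorem linear_gaussian_sequential_update {m k : ℕ} (j : ℕ) (hj : 2 ≤ j)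
    (A : Matrix (Fin k) (Fin m) ℝ)
    (hdet : ∀ ε : ℝ, 0 < ε →
      IsUnit (A.transpose * A + ε • (1 : Matrix (Fin m) (Fin m) ℝ)).det)
    (z : ℕ → (Fin k → ℝ))
    (zbar : ℕ → (Fin k → ℝ))
    (hzbar : ∀ n : ℕ, 1 ≤ n → zbar n = (n : ℝ)⁻¹ • ∑ i ∈ Finset.Icc 1 n, z i)
    (θprev : Fin m → ℝ)
    (hprev : θprev = ((A.transpose * A + ((j : ℝ) - 1)⁻¹ • 1)⁻¹).mulVec
      (A.transpose.mulVec (zbar (j - 1)))) :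
    θprev + (j : ℝ)⁻¹ • ((A.transpose * A + (j : ℝ)⁻¹ • 1)⁻¹).mulVec
        (A.transpose.mulVec (z j - A.mulVec θprev))
      = ((A.transpose * A + (j : ℝ)⁻¹ • 1)⁻¹).mulVec (A.transpose.mulVec (zbar j)) := by
  obtain ⟨n, rfl⟩ : ∃ n, j = n + 1 := ⟨j - 1, by omega⟩
  have hn : (n : ℝ) ≠ 0 := by norm_cast; omega
  have hj : ((n + 1 : ℕ) : ℝ) ≠ 0 := by positivity
  have hjdet := hdet _ (inv_pos.2 (by positivity : (0 : ℝ) < (n + 1 : ℕ)))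
  set Q := (n : ℝ) • (Aᵀ * A) + 1
  have hQ : IsUnit Q.det := Matrix.isUnit_det_smul_add_one _ hn (hdet _ (by positivity))
  have hQθ : Q *ᵥ θprev = Aᵀ *ᵥ ∑ i ∈ Finset.Icc 1 n, z i := by
    rw [hprev, Nat.cast_add_one, add_sub_cancel_right, Nat.add_sub_cancel, hzbar n (by omega),
      Matrix.mulVec_smul, Matrix.inv_add_inv_smul_one_mulVec_inv_smul _ hn (hdet _ (by positivity)),
      Matrix.mulVec_mulVec, Matrix.mul_nonsing_inv _ hQ, Matrix.one_mulVec]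
  have hP : ((n + 1 : ℕ) : ℝ) • (Aᵀ * A) + 1 = Q + Aᵀ * A := by
    simp only [Q, Nat.cast_add_one, add_smul, one_smul]
    abel
  have hPdet : IsUnit (Q + Aᵀ * A).det := hP ▸ Matrix.isUnit_det_smul_add_one _ hj hjdet
  rw [← Matrix.mulVec_smul, hzbar (n + 1) (by omega), Matrix.mulVec_smul Aᵀ,
    Matrix.inv_add_inv_smul_one_mulVec_inv_smul _ hj hjdet,
    Matrix.inv_add_inv_smul_one_mulVec_inv_smul _ hj hjdet, hP,
    Matrix.add_inv_mulVec_transpose_mulVec_sub Q A hPdet, hQθ, Finset.sum_Icc_succ_top (by omega),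
    Matrix.mulVec_add Aᵀ, Matrix.mulVec_add]
end
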